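/- Let (σₙ,τ₀ₙ,τ₁ₙ)_{n≥0} be an arbitrary sequence of triples of permutations in S₃ and let i : ℕ → {0,1} be purely periodic with period p ≥ 1 (i.e. i_{m+p} = i_m for all m ≥ 0). Suppose there exist a constant C > 0 and an integer k with 1 ≤ k ≤ p such that for every n ≥ 0 and every pair j, j' ∈ {1,2,3} one has x_{np+k,j} ≤ C·x_{np+k,j'}. Then the intersection Δ(i₀,i₁,…) = ⋂_{n≥0} Δ(i₀,…,iₙ) is a singleton. -/

import Mathlib

open Matrix

noncomputable section

/-- `A₀ = ![![0,0,1],![1,0,0],![0,1,1]]`. -/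
def A0 : Matrix (Fin 3) (Fin 3) ℝ := !![0,0,1; 1,0,0; 0,1,1]
/-- `A₁ = ![![1,0,1],![0,1,0],![0,0,1]]`. -/
def A1 : Matrix (Fin 3) (Fin 3) ℝ := !![1,0,1; 0,1,0; 0,0,1]
/-- `B = ![![1,1,1],![0,1,1],![0,0,1]]`. -/
def Bm : Matrix (Fin 3) (Fin 3) ℝ := !![1,1,1; 0,1,1; 0,0,1]

/-- The permutation matrix of `ρ`: entry `(i,j)` is `1` iff `ρ i = j`.  In particular
`P (finRotate 3)`, the matrix of the cycle `(1 2 3)`, is `![![0,1,0],![0,0,1],![1,0,0]]`. -/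
def P (ρ : Equiv.Perm (Fin 3)) : Matrix (Fin 3) (Fin 3) ℝ := ρ.permMatrix ℝ

/-- The pair of TRIP matrices `F₀ = P_σ·A₀·P_{τ₀}`, `F₁ = P_σ·A₁·P_{τ₁}` of a triple
of permutations, as a function `Fin 2 → Matrix`. -/
def Fmat (σ τ0 τ1 : Equiv.Perm (Fin 3)) : Fin 2 → Matrix (Fin 3) (Fin 3) ℝ :=
  ![P σ * A0 * P τ0, P σ * A1 * P τ1]

/-- `prodMat G n = B · (G 0) · (G 1) ⋯ (G n)`. -/
def prodMat (G : ℕ → Matrix (Fin 3) (Fin 3) ℝ) (n : ℕ) : Matrix (Fin 3) (Fin 3) ℝ :=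
  Bm * ((List.range (n+1)).map G).prod

/-- The triangle `Δ(i₀,…,iₙ)`: the convex hull of the images under
`π(x₀,x₁,x₂) = (x₁/x₀, x₂/x₀)` of the three columns of `M`. -/
def tri (M : Matrix (Fin 3) (Fin 3) ℝ) : Set (ℝ × ℝ) :=
  convexHull ℝ {p | ∃ j : Fin 3, p = (M 1 j / M 0 j, M 2 j / M 0 j)}

/-- `Δ(i₀,i₁,…) = ⋂ₙ Δ(i₀,…,iₙ)`, for the sequence of matrices `G m = F_{i_m}`. -/
def DeltaInf (G : ℕ → Matrix (Fin 3) (Fin 3) ℝ) : Set (ℝ × ℝ) :=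
  ⋂ n : ℕ, tri (prodMat G n)

/-!
The vertices of `tri M` are the projected columns of `M`, and passing from `M` to `M * R`
(`R` nonnegative) replaces each vertex by a convex combination of the old ones, with weights
`M 0 l * R l j / (M * R) 0 j`. At the times `n * p + k` the first-row entries are comparable,
and some row of every step matrix sums to `2`, so the first-row sum grows by the factor
`1 + (3C)⁻¹` every period. Hence after `m₀` periods, with `(1 + (3C)⁻¹) ^ m₀ > 3C`, no
column of the block product `R` can have a single nonzero entry: by unimodularity that entry
would be `1` and the corresponding first-row entry would not have grown. So every new vertex gives
weight at least `β = (3C · 2 ^ (m₀ p))⁻¹` to two of the three old vertices, any two new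
vertices share one of them, and the spread of each coordinate over the vertices shrinks by
the factor `1 - β` every `m₀` periods. The nested compact triangles meet in a single point.
-/

namespace Matrix

theorem dvd_det_of_forall_ne_col_eq_zero {n R : Type*} [Fintype n] [DecidableEq n] [CommRing R]
    (A : Matrix n n R) {l j : n} (h : ∀ i, i ≠ l → A i j = 0) : A l j ∣ A.det := by
  have hcol : A.updateCol j (A l j • Pi.single l 1) = A := by
    ext i j'
    rcases eq_or_ne j' j with rfl | hj
    · rcases eq_or_ne i l with rfl | hi
      · simp
      · simp [hi, h i hi]
    · rw [updateCol_ne hj]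
  refine ⟨(A.updateCol j (Pi.single l 1)).det, ?_⟩
  calc A.det = (A.updateCol j (A l j • Pi.single l 1)).det := by rw [hcol]
    _ = _ := det_updateCol_smul _ _ _ _

end Matrix

theorem sum_mul_sub_sum_mul_le {ι : Type*} [Fintype ι] {w w' f : ι → ℝ} {β D : ℝ} {c : ι}
    (hw : ∀ l, 0 ≤ w l) (hw' : ∀ l, 0 ≤ w' l)
    (hw1 : ∑ l, w l = 1) (hw'1 : ∑ l, w' l = 1)
    (hc : β ≤ w c) (hc' : β ≤ w' c) (hf : ∀ l l', f l - f l' ≤ D) :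
    ∑ l, w l * f l - ∑ l, w' l * f l ≤ (1 - β) * D := by
  -- the common weight `β` on `f c` keeps the first average below `max f` and the second
  -- above `min f`, each by `β` times the distance of `f c` to that extreme
  have : Nonempty ι := ⟨c⟩
  obtain ⟨l₀, hl₀⟩ := Finite.exists_min f
  have hupper : β * (f l₀ + D - f c) ≤ f l₀ + D - ∑ l, w l * f l :=
    calc β * (f l₀ + D - f c) ≤ w c * (f l₀ + D - f c) :=
          mul_le_mul_of_nonneg_right hc (by linarith [hf c l₀])
      _ ≤ ∑ l, w l * (f l₀ + D - f l) :=
          Finset.single_le_sum (f := fun l => w l * (f l₀ + D - f l))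
            (fun l _ => mul_nonneg (hw l) (by linarith [hf l l₀])) (Finset.mem_univ c)
      _ = f l₀ + D - ∑ l, w l * f l := by
          simp only [mul_sub, Finset.sum_sub_distrib, ← Finset.sum_mul, hw1, one_mul]
  have hlower : β * (f c - f l₀) ≤ ∑ l, w' l * f l - f l₀ :=
    calc β * (f c - f l₀) ≤ w' c * (f c - f l₀) :=
          mul_le_mul_of_nonneg_right hc' (by linarith [hl₀ c])
      _ ≤ ∑ l, w' l * (f l - f l₀) :=
          Finset.single_le_sum (f := fun l => w' l * (f l - f l₀))
            (fun l _ => mul_nonneg (hw' l) (by linarith [hl₀ l])) (Finset.mem_univ c)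
      _ = ∑ l, w' l * f l - f l₀ := by
          simp only [mul_sub, Finset.sum_sub_distrib, ← Finset.sum_mul, hw'1, one_mul]
  linarith

theorem Fin.exists_eq_of_ne_of_ne {a b c d : Fin 3} (hab : a ≠ b) (hcd : c ≠ d) :
    ∃ e, (e = a ∨ e = b) ∧ (e = c ∨ e = d) := by
  revert a b c d
  decide

def nonnegUnimodular (n : Type*) [Fintype n] [DecidableEq n] : Submonoid (Matrix n n ℝ) where
  carrier :=
    {A | A ∈ Set.range (Int.castRingHom ℝ).mapMatrix ∧ (∀ i j, 0 ≤ A i j) ∧ |A.det| = 1}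
  mul_mem' := by
    rintro _ _ ⟨⟨Z, rfl⟩, hA, hdA⟩ ⟨⟨W, rfl⟩, hB, hdB⟩
    refine ⟨⟨Z * W, map_mul _ _ _⟩,
      fun i j => Finset.sum_nonneg fun l _ => mul_nonneg (hA i l) (hB l j), ?_⟩
    rw [det_mul, abs_mul, hdA, hdB, one_mul]
  one_mem' :=
    ⟨⟨1, map_one _⟩, fun i j => by rw [one_apply]; split_ifs <;> norm_num, by simp⟩

namespace nonnegUnimodular

variable {n : Type*} [Fintype n] [DecidableEq n] {A : Matrix n n ℝ}

theorem nonneg (hA : A ∈ nonnegUnimodular n) (i j : n) : 0 ≤ A i j := hA.2.1 i j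

theorem one_le_of_pos (hA : A ∈ nonnegUnimodular n) {i j : n} (h : 0 < A i j) : 1 ≤ A i j := by
  obtain ⟨⟨Z, rfl⟩, -⟩ := hA
  change (0 : ℝ) < Z i j at h
  change (1 : ℝ) ≤ Z i j
  exact_mod_cast (show (0 : ℤ) < Z i j by exact_mod_cast h)

theorem exists_pos_col (hA : A ∈ nonnegUnimodular n) (j : n) : ∃ i, 0 < A i j := by
  by_contra! h
  have := det_eq_zero_of_column_eq_zero j fun i => le_antisymm (h i) (nonneg hA i j)
  simpa [this] using hA.2.2

theorem exists_pos_row (hA : A ∈ nonnegUnimodular n) (i : n) : ∃ j, 0 < A i j := by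
  by_contra! h
  have := det_eq_zero_of_row_eq_zero i fun j => le_antisymm (h j) (nonneg hA i j)
  simpa [this] using hA.2.2

theorem one_le_rowSum (hA : A ∈ nonnegUnimodular n) (i : n) : 1 ≤ ∑ j, A i j := by
  obtain ⟨j, hj⟩ := exists_pos_row hA i
  exact (one_le_of_pos hA hj).trans
    (Finset.single_le_sum (fun j _ => nonneg hA i j) (Finset.mem_univ j))

theorem eq_one_of_forall_ne_col_eq_zero (hA : A ∈ nonnegUnimodular n) {l j : n}
    (hl : 0 < A l j) (h : ∀ i, i ≠ l → A i j = 0) : A l j = 1 := by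
  obtain ⟨⟨Z, rfl⟩, -, hdet⟩ := hA
  change (0 : ℝ) < Z l j at hl
  change ∀ i, i ≠ l → ((Z i j : ℤ) : ℝ) = 0 at h
  change ((Z l j : ℤ) : ℝ) = 1
  rw [← RingHom.map_det, eq_intCast, ← Int.cast_abs] at hdet
  have hunit : IsUnit Z.det := Int.isUnit_iff_abs_eq.2 (by exact_mod_cast hdet)
  have hZ := Int.isUnit_iff.1 (isUnit_of_dvd_unit
    (Z.dvd_det_of_forall_ne_col_eq_zero fun i hi => by exact_mod_cast h i hi) hunit)
  have : (0 : ℤ) < Z l j := by exact_mod_cast hl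
  rcases hZ with hZ | hZ
  · simp [hZ]
  · omega

theorem submatrix_mem (hA : A ∈ nonnegUnimodular n) (e₁ e₂ : n ≃ n) :
    A.submatrix e₁ e₂ ∈ nonnegUnimodular n := by
  obtain ⟨⟨Z, rfl⟩, hA, hdet⟩ := hA
  exact ⟨⟨Z.submatrix e₁ e₂, rfl⟩, fun i j => hA _ _,
    by rw [abs_det_submatrix_equiv_equiv, hdet]⟩

end nonnegUnimodular

-- The properties of the matrices `P σ * Aε * P τ` on which the argument rests.
structure IsTripMatrix (A : Matrix (Fin 3) (Fin 3) ℝ) : Prop where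
  mem_nonnegUnimodular : A ∈ nonnegUnimodular (Fin 3)
  rowSum_le_two : ∀ i, ∑ j, A i j ≤ 2
  exists_two_le_rowSum : ∃ i, 2 ≤ ∑ j, A i j

theorem IsTripMatrix.submatrix {A : Matrix (Fin 3) (Fin 3) ℝ} (hA : IsTripMatrix A)
    (σ τ : Equiv.Perm (Fin 3)) : IsTripMatrix (A.submatrix σ τ) := by
  have hrow : ∀ i, ∑ j, A.submatrix σ τ i j = ∑ j, A (σ i) j := fun i =>
    Equiv.sum_comp τ (A (σ i))
  obtain ⟨i, hi⟩ := hA.exists_two_le_rowSum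
  refine ⟨nonnegUnimodular.submatrix_mem hA.mem_nonnegUnimodular σ τ,
    fun i => (hrow i).trans_le (hA.rowSum_le_two _), σ.symm i, ?_⟩
  rwa [hrow, Equiv.apply_symm_apply]

theorem isTripMatrix_A0 : IsTripMatrix A0 := by
  refine ⟨⟨⟨!![0,0,1; 1,0,0; 0,1,1], ?_⟩, ?_, ?_⟩, ?_, 2, ?_⟩
  · ext i j; fin_cases i <;> fin_cases j <;> simp [A0]
  · intro i j; fin_cases i <;> fin_cases j <;> simp [A0]
  · simp [A0, det_fin_three]
  · intro i; fin_cases i <;> norm_num [A0, Fin.sum_univ_three, cons_val_two, vecHead, vecTail]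
  · norm_num [A0, Fin.sum_univ_three, cons_val_two, vecHead, vecTail]

theorem isTripMatrix_A1 : IsTripMatrix A1 := by
  refine ⟨⟨⟨!![1,0,1; 0,1,0; 0,0,1], ?_⟩, ?_, ?_⟩, ?_, 0, ?_⟩
  · ext i j; fin_cases i <;> fin_cases j <;> simp [A1]
  · intro i j; fin_cases i <;> fin_cases j <;> simp [A1]
  · simp [A1, det_fin_three]
  · intro i; fin_cases i <;> norm_num [A1, Fin.sum_univ_three, cons_val_two, vecHead, vecTail]
  · norm_num [A1, Fin.sum_univ_three, cons_val_two, vecHead, vecTail]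

theorem P_mul_mul_P (σ τ : Equiv.Perm (Fin 3)) (A : Matrix (Fin 3) (Fin 3) ℝ) :
    P σ * A * P τ = A.submatrix σ τ.symm := by
  rw [P, P, Equiv.Perm.permMatrix, Equiv.Perm.permMatrix, Matrix.mul_assoc,
    PEquiv.mul_toMatrix_toPEquiv, PEquiv.toMatrix_toPEquiv_mul, submatrix_submatrix]
  rfl

theorem isTripMatrix_Fmat (σ τ0 τ1 : Equiv.Perm (Fin 3)) (ε : Fin 2) :
    IsTripMatrix (Fmat σ τ0 τ1 ε) := by
  fin_cases ε
  · simpa [Fmat, P_mul_mul_P] using isTripMatrix_A0.submatrix σ τ0.symm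
  · simpa [Fmat, P_mul_mul_P] using isTripMatrix_A1.submatrix σ τ1.symm

def vertex (M : Matrix (Fin 3) (Fin 3) ℝ) (j : Fin 3) : ℝ × ℝ :=
  (M 1 j / M 0 j, M 2 j / M 0 j)

theorem tri_eq_convexHull_range_vertex (M : Matrix (Fin 3) (Fin 3) ℝ) :
    tri M = convexHull ℝ (Set.range (vertex M)) := by
  simp only [tri, vertex, Set.range, eq_comm]

theorem isCompact_tri (M : Matrix (Fin 3) (Fin 3) ℝ) : IsCompact (tri M) := by
  rw [tri_eq_convexHull_range_vertex]
  exact (Set.finite_range _).isCompact_convexHull ℝ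

theorem vertex_mem_tri (M : Matrix (Fin 3) (Fin 3) ℝ) (j : Fin 3) : vertex M j ∈ tri M := by
  rw [tri_eq_convexHull_range_vertex]
  exact subset_convexHull ℝ _ ⟨j, rfl⟩

theorem sub_le_of_mem_tri {M : Matrix (Fin 3) (Fin 3) ℝ} (φ : ℝ × ℝ →ₗ[ℝ] ℝ) {D : ℝ}
    (hD : ∀ l l', φ (vertex M l) - φ (vertex M l') ≤ D) {z q : ℝ × ℝ} (hz : z ∈ tri M)
    (hq : q ∈ tri M) : φ z - φ q ≤ D := by
  rw [tri_eq_convexHull_range_vertex] at hz hq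
  have hz' : ∀ l, φ z - D ≤ φ (vertex M l) := by
    intro l
    have hsub : Set.range (vertex M) ⊆ {y | φ y ≤ φ (vertex M l) + D} := by
      rintro _ ⟨l', rfl⟩
      exact (by linarith [hD l' l] : φ (vertex M l') ≤ φ (vertex M l) + D)
    have : φ z ≤ φ (vertex M l) + D :=
      convexHull_min hsub (convex_halfSpace_le φ.isLinear _) hz
    linarith
  have : φ z - D ≤ φ q := by
    refine convexHull_min ?_ (convex_halfSpace_ge φ.isLinear (φ z - D)) hq
    rintro _ ⟨l, rfl⟩
    exact hz' l
  linarith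

section Weights

variable (M R : Matrix (Fin 3) (Fin 3) ℝ)

def mulWeight (j l : Fin 3) : ℝ := M 0 l * R l j / (M * R) 0 j

theorem sum_mulWeight {j : Fin 3} (hj : (M * R) 0 j ≠ 0) : ∑ l, mulWeight M R j l = 1 := by
  rw [← div_self hj, mul_apply, Finset.sum_div]
  rfl

theorem vertex_mul (hM : ∀ l, M 0 l ≠ 0) {j : Fin 3} (hj : (M * R) 0 j ≠ 0) :
    vertex (M * R) j = ∑ l, mulWeight M R j l • vertex M l := by
  have key : ∀ r, (M * R) r j / (M * R) 0 j = ∑ l, mulWeight M R j l * (M r l / M 0 l) := by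
    intro r
    rw [mul_apply, Finset.sum_div]
    refine Finset.sum_congr rfl fun l _ => ?_
    rw [mulWeight]
    field_simp [hM l]
  ext <;> simp [vertex, key, Prod.fst_sum, Prod.snd_sum]

variable {M R}

theorem mul_apply_zero_pos (hM : ∀ l, 0 < M 0 l) (hR : R ∈ nonnegUnimodular (Fin 3))
    (j : Fin 3) : 0 < (M * R) 0 j := by
  obtain ⟨i, hi⟩ := nonnegUnimodular.exists_pos_col hR j
  rw [mul_apply]
  exact (mul_pos (hM i) hi).trans_le <| Finset.single_le_sum (f := fun l => M 0 l * R l j)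
    (fun l _ => mul_nonneg (hM l).le (nonnegUnimodular.nonneg hR l j)) (Finset.mem_univ i)

theorem mulWeight_nonneg (hM : ∀ l, 0 < M 0 l) (hR : R ∈ nonnegUnimodular (Fin 3))
    (j l : Fin 3) : 0 ≤ mulWeight M R j l :=
  div_nonneg (mul_nonneg (hM l).le (nonnegUnimodular.nonneg hR l j))
    (mul_apply_zero_pos hM hR j).le

theorem inv_le_mulWeight (hM : ∀ l, 0 < M 0 l) (hR : R ∈ nonnegUnimodular (Fin 3))
    {K : ℝ} (hK : 0 < K) {j l : Fin 3} (hjl : (M * R) 0 j ≤ K * M 0 l) (hRlj : 0 < R l j) :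
    K⁻¹ ≤ mulWeight M R j l := by
  rw [mulWeight, le_div_iff₀ (mul_apply_zero_pos hM hR j)]
  calc K⁻¹ * (M * R) 0 j ≤ M 0 l := by
        rw [inv_mul_le_iff₀ hK]; exact hjl
    _ ≤ M 0 l * R l j :=
        le_mul_of_one_le_right (hM l).le (nonnegUnimodular.one_le_of_pos hR hRlj)

theorem tri_mul_subset (hM : ∀ l, 0 < M 0 l) (hR : R ∈ nonnegUnimodular (Fin 3)) :
    tri (M * R) ⊆ tri M := by
  have hconv : Convex ℝ (tri M) := convex_convexHull ℝ _
  rw [tri_eq_convexHull_range_vertex (M * R)]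
  refine convexHull_min ?_ hconv
  rintro _ ⟨j, rfl⟩
  have hj := (mul_apply_zero_pos hM hR j).ne'
  rw [vertex_mul M R (fun l => (hM l).ne') hj]
  exact hconv.sum_mem (fun l _ => mulWeight_nonneg hM hR j l) (sum_mulWeight M R hj)
    (fun l _ => vertex_mem_tri M l)

theorem vertex_mul_sub_le (φ : ℝ × ℝ →ₗ[ℝ] ℝ) (hM : ∀ l, 0 < M 0 l)
    (hR : R ∈ nonnegUnimodular (Fin 3)) {K D : ℝ} (hK : 0 < K)
    (hbound : ∀ j l, (M * R) 0 j ≤ K * M 0 l)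
    (htwo : ∀ j, ∃ l l', l ≠ l' ∧ 0 < R l j ∧ 0 < R l' j)
    (hD : ∀ l l', φ (vertex M l) - φ (vertex M l') ≤ D) (j j' : Fin 3) :
    φ (vertex (M * R) j) - φ (vertex (M * R) j') ≤ (1 - K⁻¹) * D := by
  have hφ : ∀ j, φ (vertex (M * R) j) = ∑ l, mulWeight M R j l * φ (vertex M l) := by
    intro j
    rw [vertex_mul M R (fun l => (hM l).ne') (mul_apply_zero_pos hM hR j).ne', map_sum]
    simp only [map_smul, smul_eq_mul]
  obtain ⟨l₁, l₂, h₁₂, hl₁, hl₂⟩ := htwo j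
  obtain ⟨l₃, l₄, h₃₄, hl₃, hl₄⟩ := htwo j'
  obtain ⟨c, hc, hc'⟩ := Fin.exists_eq_of_ne_of_ne h₁₂ h₃₄
  have hRc : 0 < R c j := by rcases hc with rfl | rfl <;> assumption
  have hRc' : 0 < R c j' := by rcases hc' with rfl | rfl <;> assumption
  rw [hφ, hφ]
  exact sum_mul_sub_sum_mul_le (mulWeight_nonneg hM hR j) (mulWeight_nonneg hM hR j')
    (sum_mulWeight M R (mul_apply_zero_pos hM hR j).ne')
    (sum_mulWeight M R (mul_apply_zero_pos hM hR j').ne')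
    (inv_le_mulWeight hM hR hK (hbound j c) hRc) (inv_le_mulWeight hM hR hK (hbound j' c) hRc') hD

end Weights

def firstRowSum (M : Matrix (Fin 3) (Fin 3) ℝ) : ℝ := ∑ j, M 0 j

section FirstRowSum

variable {M R : Matrix (Fin 3) (Fin 3) ℝ}

theorem le_firstRowSum (hM : ∀ l, 0 ≤ M 0 l) (j : Fin 3) : M 0 j ≤ firstRowSum M :=
  Finset.single_le_sum (fun l _ => hM l) (Finset.mem_univ j)

theorem firstRowSum_le_of_forall_le {C : ℝ} {l : Fin 3} (h : ∀ j, M 0 j ≤ C * M 0 l) :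
    firstRowSum M ≤ 3 * C * M 0 l := by
  rw [firstRowSum, Fin.sum_univ_three]
  linarith [h 0, h 1, h 2]

theorem firstRowSum_mul (M R : Matrix (Fin 3) (Fin 3) ℝ) :
    firstRowSum (M * R) = ∑ l, M 0 l * ∑ j, R l j := by
  simp only [firstRowSum, mul_apply, Finset.mul_sum]
  exact Finset.sum_comm

theorem firstRowSum_mul_le (hM : ∀ l, 0 ≤ M 0 l) {c : ℝ} (hR : ∀ l, ∑ j, R l j ≤ c) :
    firstRowSum (M * R) ≤ c * firstRowSum M := by
  rw [firstRowSum_mul, firstRowSum, Finset.mul_sum]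
  exact Finset.sum_le_sum fun l _ => by nlinarith [hM l, hR l]

theorem exists_firstRowSum_add_le (hM : ∀ l, 0 ≤ M 0 l) (hR : IsTripMatrix R) :
    ∃ l, firstRowSum M + M 0 l ≤ firstRowSum (M * R) := by
  obtain ⟨l, hl⟩ := hR.exists_two_le_rowSum
  have hexcess : ∀ i, 0 ≤ M 0 i * (∑ j, R i j - 1) := fun i => mul_nonneg (hM i)
    (by linarith [nonnegUnimodular.one_le_rowSum hR.mem_nonnegUnimodular i])
  refine ⟨l, ?_⟩
  calc firstRowSum M + M 0 l ≤ firstRowSum M + M 0 l * (∑ j, R l j - 1) := by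
        nlinarith [hM l]
    _ ≤ firstRowSum M + ∑ i, M 0 i * (∑ j, R i j - 1) := by
        gcongr
        exact Finset.single_le_sum (fun i _ => hexcess i) (Finset.mem_univ l)
    _ = firstRowSum (M * R) := by
        rw [firstRowSum_mul]
        simp only [firstRowSum, mul_sub, mul_one, Finset.sum_sub_distrib]
        ring

theorem exists_two_pos_of_firstRowSum_lt (hM : ∀ l, 0 < M 0 l)
    (hR : R ∈ nonnegUnimodular (Fin 3)) {C : ℝ} (hC : 0 ≤ C)
    (hratio : ∀ j j', (M * R) 0 j ≤ C * (M * R) 0 j')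
    (hgrowth : 3 * C * firstRowSum M < firstRowSum (M * R)) (j : Fin 3) :
    ∃ l l', l ≠ l' ∧ 0 < R l j ∧ 0 < R l' j := by
  obtain ⟨l, hl⟩ := nonnegUnimodular.exists_pos_col hR j
  by_contra! hsingle
  have hzero : ∀ i, i ≠ l → R i j = 0 := fun i hi =>
    le_antisymm (hsingle l i (Ne.symm hi) hl) (nonnegUnimodular.nonneg hR i j)
  -- by unimodularity the one nonzero entry of column `j` is `1`, so `(M * R) 0 j` has not grown
  have hcol : (M * R) 0 j = M 0 l := by
    rw [mul_apply, Finset.sum_eq_single l (fun i _ hi => by rw [hzero i hi, mul_zero])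
      (by simp), nonnegUnimodular.eq_one_of_forall_ne_col_eq_zero hR hl hzero, mul_one]
  have hS := firstRowSum_le_of_forall_le fun j' => hratio j' j
  have hl' := le_firstRowSum (fun i => (hM i).le) l
  rw [hcol] at hS
  nlinarith

end FirstRowSum

section Products

variable {G : ℕ → Matrix (Fin 3) (Fin 3) ℝ}

theorem prodMat_add (G : ℕ → Matrix (Fin 3) (Fin 3) ℝ) (a m : ℕ) :
    prodMat G (a + m) = prodMat G a * ((List.range m).map fun t => G (a + 1 + t)).prod := by
  rw [prodMat, prodMat, Nat.add_right_comm, List.range_add, List.map_append, List.prod_append,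
    List.map_map, Matrix.mul_assoc]
  rfl

theorem prodMat_succ (G : ℕ → Matrix (Fin 3) (Fin 3) ℝ) (n : ℕ) :
    prodMat G (n + 1) = prodMat G n * G (n + 1) := by
  simpa using prodMat_add G n 1

variable (hG : ∀ m, IsTripMatrix (G m))
include hG

theorem exists_prodMat_eq_mul {a b : ℕ} (hab : a ≤ b) :
    ∃ R ∈ nonnegUnimodular (Fin 3), prodMat G b = prodMat G a * R := by
  obtain ⟨m, rfl⟩ := Nat.exists_eq_add_of_le hab
  refine ⟨_, Submonoid.list_prod_mem _ ?_, prodMat_add G a m⟩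
  simp only [List.mem_map]
  rintro _ ⟨t, -, rfl⟩
  exact (hG _).mem_nonnegUnimodular

theorem prodMat_apply_zero_pos (n : ℕ) (j : Fin 3) : 0 < prodMat G n 0 j := by
  obtain ⟨R, hR, hn⟩ := exists_prodMat_eq_mul hG n.zero_le
  have hBm : ∀ l, 0 < Bm 0 l := by
    intro l
    fin_cases l <;> simp [Bm]
  have h0 : prodMat G 0 = Bm * G 0 := by simp [prodMat]
  rw [hn]
  exact mul_apply_zero_pos
    (h0 ▸ mul_apply_zero_pos hBm (hG 0).mem_nonnegUnimodular) hR j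

theorem tri_prodMat_antitone : Antitone fun n => tri (prodMat G n) := by
  intro a b hab
  obtain ⟨R, hR, hb⟩ := exists_prodMat_eq_mul hG hab
  simpa only [hb] using tri_mul_subset (prodMat_apply_zero_pos hG a) hR

theorem firstRowSum_prodMat_monotone : Monotone fun n => firstRowSum (prodMat G n) := by
  refine monotone_nat_of_le_succ fun n => ?_
  obtain ⟨l, hl⟩ := exists_firstRowSum_add_le (fun l => (prodMat_apply_zero_pos hG n l).le)
    (hG (n + 1))
  rw [prodMat_succ]
  linarith [prodMat_apply_zero_pos hG n l]

theorem firstRowSum_prodMat_add_le (a m : ℕ) :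
    firstRowSum (prodMat G (a + m)) ≤ 2 ^ m * firstRowSum (prodMat G a) := by
  induction m with
  | zero => simp
  | succ m ih =>
    rw [← add_assoc, prodMat_succ, pow_succ']
    have := firstRowSum_mul_le (fun l => (prodMat_apply_zero_pos hG (a + m) l).le)
      (hG (a + m + 1)).rowSum_le_two
    nlinarith

variable {p k : ℕ} {C : ℝ}
  (hb : ∀ n : ℕ, ∀ j j' : Fin 3, prodMat G (n * p + k) 0 j ≤ C * prodMat G (n * p + k) 0 j')
include hb

theorem one_le_of_ratio_le : 1 ≤ C :=
  le_of_mul_le_mul_right (by simpa using hb 0 0 0) (prodMat_apply_zero_pos hG (0 * p + k) 0)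

theorem firstRowSum_prodMat_growth (n : ℕ) :
    (1 + (3 * C)⁻¹) * firstRowSum (prodMat G (n * p + k)) ≤
      firstRowSum (prodMat G (n * p + k + 1)) := by
  have hpos := prodMat_apply_zero_pos hG (n * p + k)
  obtain ⟨l, hl⟩ := exists_firstRowSum_add_le (fun l => (hpos l).le) (hG (n * p + k + 1))
  have hS : (3 * C)⁻¹ * firstRowSum (prodMat G (n * p + k)) ≤ prodMat G (n * p + k) 0 l := by
    rw [inv_mul_le_iff₀ (by linarith [one_le_of_ratio_le hG hb])]
    exact firstRowSum_le_of_forall_le fun j => hb n j l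
  rw [prodMat_succ]
  linarith

theorem pow_mul_firstRowSum_prodMat_le (hp : 1 ≤ p) (n m : ℕ) :
    (1 + (3 * C)⁻¹) ^ m * firstRowSum (prodMat G (n * p + k)) ≤
      firstRowSum (prodMat G ((n + m) * p + k)) := by
  induction m with
  | zero => simp
  | succ m ih =>
    have hθ : 0 ≤ 1 + (3 * C)⁻¹ := by
      have := one_le_of_ratio_le hG hb
      have : 0 ≤ (3 * C)⁻¹ := inv_nonneg.2 (by linarith)
      linarith
    calc (1 + (3 * C)⁻¹) ^ (m + 1) * firstRowSum (prodMat G (n * p + k))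
        = (1 + (3 * C)⁻¹) * ((1 + (3 * C)⁻¹) ^ m * firstRowSum (prodMat G (n * p + k))) := by
          ring
      _ ≤ (1 + (3 * C)⁻¹) * firstRowSum (prodMat G ((n + m) * p + k)) :=
          mul_le_mul_of_nonneg_left ih hθ
      _ ≤ firstRowSum (prodMat G ((n + m) * p + k + 1)) := firstRowSum_prodMat_growth hG hb _
      _ ≤ firstRowSum (prodMat G ((n + (m + 1)) * p + k)) :=
          firstRowSum_prodMat_monotone hG (by nlinarith)


theorem vertex_prodMat_sub_le (hp : 1 ≤ p) {m₀ : ℕ} (hm₀ : 3 * C < (1 + (3 * C)⁻¹) ^ m₀)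
    (φ : ℝ × ℝ →ₗ[ℝ] ℝ) {D : ℝ} (n : ℕ)
    (hD : ∀ l l', φ (vertex (prodMat G (n * p + k)) l) -
      φ (vertex (prodMat G (n * p + k)) l') ≤ D) (j j' : Fin 3) :
    φ (vertex (prodMat G ((n + m₀) * p + k)) j) -
      φ (vertex (prodMat G ((n + m₀) * p + k)) j') ≤ (1 - (3 * C * 2 ^ (m₀ * p))⁻¹) * D := by
  have hC := one_le_of_ratio_le hG hb
  have hpos := prodMat_apply_zero_pos hG (n * p + k)
  have htime : (n + m₀) * p + k = n * p + k + m₀ * p := by ring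
  have hSpos : 0 < firstRowSum (prodMat G (n * p + k)) :=
    (hpos 0).trans_le (le_firstRowSum (fun l => (hpos l).le) 0)
  have hgrowth : 3 * C * firstRowSum (prodMat G (n * p + k)) <
      firstRowSum (prodMat G ((n + m₀) * p + k)) :=
    (mul_lt_mul_of_pos_right hm₀ hSpos).trans_le (pow_mul_firstRowSum_prodMat_le hG hb hp n m₀)
  have hbound : ∀ i l, prodMat G ((n + m₀) * p + k) 0 i ≤
      3 * C * 2 ^ (m₀ * p) * prodMat G (n * p + k) 0 l := by
    intro i l
    have h₁ := le_firstRowSum (fun l => (prodMat_apply_zero_pos hG ((n + m₀) * p + k) l).le) i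
    have h₂ := firstRowSum_prodMat_add_le hG (n * p + k) (m₀ * p)
    have h₃ := firstRowSum_le_of_forall_le fun j => hb n j l
    rw [← htime] at h₂
    calc prodMat G ((n + m₀) * p + k) 0 i
        ≤ 2 ^ (m₀ * p) * firstRowSum (prodMat G (n * p + k)) := h₁.trans h₂
      _ ≤ 2 ^ (m₀ * p) * (3 * C * prodMat G (n * p + k) 0 l) := by gcongr
      _ = _ := by ring
  obtain ⟨R, hR, hMR⟩ :=
    exists_prodMat_eq_mul hG (show n * p + k ≤ (n + m₀) * p + k by omega)
  rw [hMR] at hgrowth hbound ⊢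
  exact vertex_mul_sub_le φ hpos hR (by positivity) hbound
    (exists_two_pos_of_firstRowSum_lt hpos hR (by linarith) (hMR ▸ hb (n + m₀)) hgrowth) hD j j'

theorem exists_vertex_prodMat_sub_le_pow (hp : 1 ≤ p) {m₀ : ℕ}
    (hm₀ : 3 * C < (1 + (3 * C)⁻¹) ^ m₀) (φ : ℝ × ℝ →ₗ[ℝ] ℝ) :
    ∃ D, ∀ s l l', φ (vertex (prodMat G (s * m₀ * p + k)) l) -
      φ (vertex (prodMat G (s * m₀ * p + k)) l') ≤
        (1 - (3 * C * 2 ^ (m₀ * p))⁻¹) ^ s * D := by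
  obtain ⟨D, hD⟩ := (Set.finite_range fun ll' : Fin 3 × Fin 3 =>
    φ (vertex (prodMat G (0 * m₀ * p + k)) ll'.1) -
      φ (vertex (prodMat G (0 * m₀ * p + k)) ll'.2)).bddAbove
  refine ⟨D, fun s => ?_⟩
  induction s with
  | zero => simpa using fun l l' => hD ⟨(l, l'), rfl⟩
  | succ s ih =>
    intro l l'
    rw [show (s + 1) * m₀ * p + k = (s * m₀ + m₀) * p + k by ring, pow_succ', mul_assoc]
    exact vertex_prodMat_sub_le hG hb hp hm₀ φ (s * m₀) ih l l'

end Products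

theorem exists_deltaInf_eq_singleton {G : ℕ → Matrix (Fin 3) (Fin 3) ℝ}
    (hG : ∀ m, IsTripMatrix (G m)) {p k : ℕ} (hp : 1 ≤ p) {C : ℝ}
    (hb : ∀ n : ℕ, ∀ j j' : Fin 3,
      prodMat G (n * p + k) 0 j ≤ C * prodMat G (n * p + k) 0 j') :
    ∃ q, DeltaInf G = {q} := by
  have hC := one_le_of_ratio_le hG hb
  obtain ⟨m₀, hm₀⟩ := pow_unbounded_of_one_lt (3 * C)
    (lt_add_of_pos_right 1 (inv_pos.2 (by linarith : (0 : ℝ) < 3 * C)))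
  set β := (3 * C * 2 ^ (m₀ * p))⁻¹
  have h2 : (1 : ℝ) ≤ 2 ^ (m₀ * p) := one_le_pow₀ (by norm_num)
  have hβ : 0 < β ∧ β ≤ 1 := ⟨by positivity, inv_le_one_of_one_le₀ (by nlinarith)⟩
  obtain ⟨q, hq⟩ := IsCompact.nonempty_iInter_of_sequence_nonempty_isCompact_isClosed _
    (fun n => tri_prodMat_antitone hG n.le_succ) (fun n => ⟨_, vertex_mem_tri _ 0⟩)
    (isCompact_tri _) (fun n => (isCompact_tri _).isClosed)
  have hle : ∀ z ∈ DeltaInf G, ∀ φ : ℝ × ℝ →ₗ[ℝ] ℝ, φ z ≤ φ q := by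
    intro z hz φ
    obtain ⟨D, hD⟩ := exists_vertex_prodMat_sub_le_pow hG hb hp hm₀ φ
    have hlim : Filter.Tendsto (fun s => (1 - β) ^ s * D) Filter.atTop (nhds 0) := by
      simpa using (tendsto_pow_atTop_nhds_zero_of_lt_one (by linarith) (by linarith)).mul_const D
    have := ge_of_tendsto' hlim fun s => sub_le_of_mem_tri φ (hD s)
      (Set.mem_iInter.1 hz _) (Set.mem_iInter.1 hq _)
    linarith
  have heq : ∀ z ∈ DeltaInf G, ∀ φ : ℝ × ℝ →ₗ[ℝ] ℝ, φ z = φ q := fun z hz φ =>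
    le_antisymm (hle z hz φ) (by simpa using hle z hz (-φ))
  exact ⟨q, Set.eq_singleton_iff_unique_mem.2 ⟨hq, fun z hz =>
    Prod.ext (heq z hz (LinearMap.fst ℝ ℝ ℝ)) (heq z hz (LinearMap.snd ℝ ℝ ℝ))⟩⟩

theorem periodic_bounded_ratios_singleton_general
    (σ τ0 τ1 : ℕ → Equiv.Perm (Fin 3)) (i : ℕ → Fin 2) (p : ℕ) (hp : 1 ≤ p)
    (C : ℝ) (k : ℕ)
    (hbound : ∀ n : ℕ, ∀ j j' : Fin 3,
      prodMat (fun m => Fmat (σ m) (τ0 m) (τ1 m) (i m)) (n * p + k) 0 j ≤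
        C * prodMat (fun m => Fmat (σ m) (τ0 m) (τ1 m) (i m)) (n * p + k) 0 j') :
    ∃ q : ℝ × ℝ, DeltaInf (fun m => Fmat (σ m) (τ0 m) (τ1 m) (i m)) = {q} :=
  exists_deltaInf_eq_singleton (fun m => isTripMatrix_Fmat (σ m) (τ0 m) (τ1 m) (i m)) hp hbound

/-- Corollary 7.1: for a purely periodic digit sequence it suffices to have the
bounded-ratio condition once per period to conclude that `Δ(i₀,i₁,…)` is a single
point. -/
theorem periodic_bounded_ratios_singleton
    (σ τ0 τ1 : ℕ → Equiv.Perm (Fin 3)) (i : ℕ → Fin 2) (p : ℕ) (hp : 1 ≤ p)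
    (hper : ∀ m, i (m + p) = i m) (C : ℝ) (hC : 0 < C) (k : ℕ) (hk1 : 1 ≤ k) (hk2 : k ≤ p)
    (hbound : ∀ n : ℕ, ∀ j j' : Fin 3,
      prodMat (fun m => Fmat (σ m) (τ0 m) (τ1 m) (i m)) (n * p + k) 0 j ≤
        C * prodMat (fun m => Fmat (σ m) (τ0 m) (τ1 m) (i m)) (n * p + k) 0 j') :
    ∃ q : ℝ × ℝ, DeltaInf (fun m => Fmat (σ m) (τ0 m) (τ1 m) (i m)) = {q} :=
  periodic_bounded_ratios_singleton_general σ τ0 τ1 i p hp C k hbound
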